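/- Let n = 2t+1 be an odd positive integer, let G_n be the Boolean function of n variables defined by G_n(X) = 1 if wt(X) ≤ t and G_n(X) = 0 otherwise, enumerate 1_{G_n} = {Y_1,…,Y_{2^{n−1}}} and 0_{G_n} = {Z_1,…,Z_{2^{n−1}}}, and set W = V(0_{G_n})·V(1_{G_n})^{−1}. Then the number of Boolean functions f of n variables with AI(f) = t+1 equals the number of tuples (k; i_1 < … < i_k; j_1 < … < j_k) with 0 ≤ k ≤ 2^{n−1} and indices in {1,…,2^{n−1}} such that the k × k submatrix of W with rows i_1,…,i_k and columns j_1,…,j_k is invertible over F_2 (the empty 0×0 matrix being invertible by convention). -/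

import Mathlib

/-- Hamming weight of a point of `F_2^n`. -/
def wtB {n : ℕ} (X : Fin n → ZMod 2) : ℕ :=
  (Finset.univ.filter (fun i => X i = 1)).card

/-- Coefficient of the monomial `∏_{i ∈ S} x_i` in the algebraic normal form of `f`. -/
def anfCoeff {n : ℕ} (f : (Fin n → ZMod 2) → ZMod 2) (S : Finset (Fin n)) : ZMod 2 :=
  ∑ x ∈ Finset.univ.filter (fun x : Fin n → ZMod 2 => ∀ i, x i = 1 → i ∈ S), f x

/-- Algebraic degree of a Boolean function (degree of its ANF). -/
def degB {n : ℕ} (f : (Fin n → ZMod 2) → ZMod 2) : ℕ :=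
  (Finset.univ.filter (fun S : Finset (Fin n) => anfCoeff f S ≠ 0)).sup Finset.card

/-- `g` is an annihilator of `f` : `g` is nonzero and `f · g = 0`. -/
def IsAnnihilator {n : ℕ} (f g : (Fin n → ZMod 2) → ZMod 2) : Prop :=
  g ≠ 0 ∧ ∀ x, f x * g x = 0

/-- Algebraic immunity: minimal degree of an annihilator of `f` or of `f ⊕ 1`. -/
noncomputable def AI {n : ℕ} (f : (Fin n → ZMod 2) → ZMod 2) : ℕ :=
  sInf {d | ∃ g, (IsAnnihilator f g ∨ IsAnnihilator (fun x => f x + 1) g) ∧ degB g = d}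

/-- Matrix whose rows (indexed by the set `T`) are the evaluation vectors `v(X)`, `X ∈ T`,
of all monomials of degree at most `D`. -/
def VSet {n : ℕ} (D : ℕ) (T : Set (Fin n → ZMod 2)) :
    Matrix T {S : Finset (Fin n) // S.card ≤ D} (ZMod 2) :=
  fun x S => ∏ i ∈ S.1, (x : Fin n → ZMod 2) i

/-- Matrix whose rows (listed according to the enumeration `Y`) are the evaluation vectors
`v(Y r)` of all monomials of degree at most `D`. -/
def VEnum {n : ℕ} (D : ℕ) {N : ℕ} (Y : Fin N → (Fin n → ZMod 2)) :
    Matrix (Fin N) {S : Finset (Fin n) // S.card ≤ D} (ZMod 2) :=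
  fun r S => ∏ i ∈ S.1, Y r i


/-!
Write `lowDegEval t c = ∑_{|S| ≤ t} c_S x^S` for the functions of degree `≤ t` (the Reed–Muller
code `RM(t, n)`). Via the algebraic normal form, `f` has an annihilator of degree `≤ t` iff some
nonzero codeword vanishes on the onset `1_f`. For `n = 2t + 1` the code has dimension `2^(n-1)`,
half of `2^n`, and is self-dual, since a product of two codewords has degree `≤ 2t < n` and so
sums to zero over `F_2^n`. Counting dimensions gives `AI f ≤ t + 1` for every `f`, and
`AI f = t + 1` iff `f` is balanced and no nonzero codeword vanishes on `1_f`; by self-duality the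
same then holds for `0_f`.

No nonzero codeword vanishes on all points of weight `≤ t`, so a codeword is determined by its
vector `u` of values on `1_{G_n}` (enumerated by `Y`), and `W u` is then its vector of values on
`0_{G_n}` (enumerated by `Z`). Encode `f` by `I = {r | f (Y r) = 0}` and `J = {s | f (Z s) = 1}`,
so that `1_f = (1_{G_n} \ Y(I)) ∪ Z(J)`: a codeword vanishing on `1_f` is a vector `u` supported
on `I` with `(W u)_J = 0`. Balancedness of `f` reads `|I| = |J|`, and then the condition is that
the minor `W[J, I]` is invertible. Finally `f ↦ (J, I)` is a bijection onto pairs of index sets,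
and these correspond to pairs of increasing enumerations.
-/

open Finset Matrix

lemma ZMod.eq_zero_or_eq_one (a : ZMod 2) : a = 0 ∨ a = 1 := by
  revert a; decide

theorem Finset.natCast_card_Icc_zmod_two {α : Type*} [DecidableEq α] (A B : Finset α) :
    (#(Icc A B) : ZMod 2) = if A = B then 1 else 0 := by
  by_cases hAB : A ⊆ B
  · rw [card_Icc_finset hAB]
    split_ifs with h
    · simp [h]
    · have : #A < #B := card_lt_card (ssubset_of_ne_of_subset h hAB)
      rw [Nat.cast_pow, Nat.cast_ofNat, show (2 : ZMod 2) = 0 from rfl, zero_pow (by omega)]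
  · rw [Icc_eq_empty hAB, if_neg (by rintro rfl; exact hAB le_rfl), card_empty, Nat.cast_zero]

theorem Function.Injective.bijective_sumElim {α β γ : Type*} {f : α → γ} {g : β → γ}
    (hf : Function.Injective f) (hg : Function.Injective g) (h : Set.range f = (Set.range g)ᶜ) :
    Function.Bijective (Sum.elim f g) :=
  ⟨hf.sumElim hg fun a b hab => (h.le ⟨a, rfl⟩ : f a ∉ Set.range g) ⟨b, hab.symm⟩,
    Set.range_eq_univ.1 (by rw [Set.Sum.elim_range, h, Set.compl_union_self])⟩

section LevelSets

variable {α β γ : Type*} [Fintype α] [Fintype β] [Fintype γ]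

def levelSet (b : ZMod 2) (v : α → ZMod 2) : Finset α := univ.filter (v · = b)

@[simp] lemma mem_levelSet {b : ZMod 2} {v : α → ZMod 2} {i : α} :
    i ∈ levelSet b v ↔ v i = b := by
  simp [levelSet]

lemma card_levelSet_of_bijective_sumElim {g : β → α} {h : γ → α}
    (hgh : Function.Bijective (Sum.elim g h)) (b : ZMod 2) (v : α → ZMod 2) :
    #(levelSet b v) = #(levelSet b (v ∘ g)) + #(levelSet b (v ∘ h)) := by
  simp only [levelSet, card_filter]
  rw [← Fintype.sum_bijective _ hgh (fun p => if v (Sum.elim g h p) = b then 1 else 0) _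
    fun _ => rfl, Fintype.sum_sum_type]
  rfl

lemma levelSet_zero [DecidableEq α] (v : α → ZMod 2) : levelSet 0 v = (levelSet 1 v)ᶜ := by
  ext i
  rcases (v i).eq_zero_or_eq_one with h | h <;> simp [h]

lemma card_levelSet_one_add_card_levelSet_zero [DecidableEq α] (v : α → ZMod 2) :
    #(levelSet 1 v) + #(levelSet 0 v) = Fintype.card α := by
  rw [levelSet_zero, card_add_card_compl]

def levelSetEquiv [DecidableEq α] (b : ZMod 2) : (α → ZMod 2) ≃ Finset α where
  toFun := levelSet b
  invFun S i := if i ∈ S then b else b + 1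
  left_inv v := by
    funext i
    simp only [mem_levelSet]
    generalize v i = a
    revert a b
    decide
  right_inv S := by
    ext i
    simp only [mem_levelSet]
    split_ifs <;> simp_all

@[simp] lemma levelSet_levelSetEquiv_symm [DecidableEq α] (b : ZMod 2) (S : Finset α) :
    levelSet b ((levelSetEquiv b).symm S) = S :=
  (levelSetEquiv b).apply_symm_apply S

noncomputable def levelSetsEquiv [DecidableEq β] [DecidableEq γ] {g : β → α} {h : γ → α}
    (hgh : Function.Bijective (Sum.elim g h)) : (α → ZMod 2) ≃ Finset β × Finset γ :=
  ((Equiv.ofBijective _ hgh).arrowCongr (Equiv.refl (ZMod 2))).symm.trans <|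
    (Equiv.sumArrowEquivProdArrow _ _ _).trans ((levelSetEquiv 1).prodCongr (levelSetEquiv 0))

end LevelSets

namespace Matrix

def IsInjectiveMinor {m n K : Type*} [Fintype n] [CommSemiring K] (A : Matrix m n K)
    (J : Finset m) (I : Finset n) : Prop :=
  ∀ u : n → K, (∀ j ∉ I, u j = 0) → (∀ i ∈ J, (A *ᵥ u) i = 0) → u = 0

theorem isUnit_det_submatrix_iff {ι m n K : Type*} [Fintype ι] [DecidableEq ι] [Fintype n]
    [DecidableEq m] [DecidableEq n] [Field K] (A : Matrix m n K) (a : ι → m) {b : ι → n}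
    (hb : Function.Injective b) :
    IsUnit (A.submatrix a b).det ↔ A.IsInjectiveMinor (univ.image a) (univ.image b) := by
  have key (u : n → K) (hu : ∀ j ∉ univ.image b, u j = 0) (i : ι) :
      (A.submatrix a b *ᵥ (u ∘ b)) i = (A *ᵥ u) (a i) :=
    Fintype.sum_of_injective b hb _ _ (fun j hj => by rw [hu j (by simpa using hj), mul_zero])
      fun _ => rfl
  rw [isUnit_iff_ne_zero, Ne, ← exists_mulVec_eq_zero_iff]
  simp only [not_exists, not_and', not_not]
  constructor
  · intro h u hu hAu
    have hub : u ∘ b = 0 :=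
      h _ (funext fun i => by rw [key u hu]; exact hAu _ (mem_image_of_mem a (mem_univ i)))
    funext j
    by_cases hj : j ∈ univ.image b
    · obtain ⟨i, -, rfl⟩ := mem_image.1 hj
      exact congrFun hub i
    · exact hu j hj
  · intro h v hv
    have hu (j) (hj : j ∉ univ.image b) : Function.extend b v 0 j = 0 :=
      Function.extend_apply' _ _ _ (by simpa using hj)
    have hub : Function.extend b v 0 ∘ b = v := funext (hb.extend_apply v 0)
    have h0 := h _ hu fun j hj => by
      obtain ⟨i, -, rfl⟩ := mem_image.1 hj
      rw [← key _ hu, hub, hv, Pi.zero_apply]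
    rw [← hub, h0, Pi.zero_comp]

end Matrix

theorem card_strictMono_pairs_eq (N : ℕ) (P : Finset (Fin N) → Finset (Fin N) → Prop) :
    Nat.card {q : (k : Fin (N + 1)) × (Fin k → Fin N) × (Fin k → Fin N) //
        StrictMono q.2.1 ∧ StrictMono q.2.2 ∧ P (univ.image q.2.1) (univ.image q.2.2)} =
      Nat.card {p : Finset (Fin N) × Finset (Fin N) // #p.1 = #p.2 ∧ P p.1 p.2} := by
  have hcard {k : ℕ} {a : Fin k → Fin N} (ha : StrictMono a) : #(univ.image a) = k := by
    rw [card_image_of_injective _ ha.injective, card_univ, Fintype.card_fin]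
  have himage {k : ℕ} {a a' : Fin k → Fin N} (ha : StrictMono a) (ha' : StrictMono a')
      (h : univ.image a = univ.image a') : a = a' :=
    (ha.range_inj ha').1 (by simpa using congrArg (fun s : Finset (Fin N) => (s : Set (Fin N))) h)
  refine Nat.card_congr (Equiv.ofBijective (fun q => ⟨(univ.image q.1.2.1, univ.image q.1.2.2),
    (hcard q.2.1).trans (hcard q.2.2.1).symm, q.2.2.2⟩) ⟨?_, ?_⟩)
  · rintro ⟨⟨k, a, b⟩, ha, hb, _⟩ ⟨⟨k', a', b'⟩, ha', hb', _⟩ h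
    simp only [Subtype.mk.injEq, Prod.mk.injEq] at h
    obtain rfl : k = k' := Fin.ext ((hcard hb).symm.trans (h.2 ▸ hcard hb'))
    obtain rfl := himage ha ha' h.1
    obtain rfl := himage hb hb' h.2
    rfl
  · rintro ⟨⟨J, I⟩, hJI, hP⟩
    refine ⟨⟨⟨⟨#I, Nat.lt_succ_of_le (card_le_univ I |>.trans_eq (Fintype.card_fin N))⟩,
      J.orderEmbOfFin hJI, I.orderEmbOfFin rfl⟩, (J.orderEmbOfFin hJI).strictMono,
      (I.orderEmbOfFin rfl).strictMono, ?_⟩, ?_⟩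
    · simpa [image_orderEmbOfFin_univ] using hP
    · simp [image_orderEmbOfFin_univ]

namespace BooleanFunction

variable {n : ℕ}

def monomial (S : Finset (Fin n)) (x : Fin n → ZMod 2) : ZMod 2 := ∏ i ∈ S, x i

lemma monomial_eq_ite (S : Finset (Fin n)) (x : Fin n → ZMod 2) :
    monomial S x = if S ⊆ levelSet 1 x then 1 else 0 := by
  have hx (i : Fin n) : x i = if x i = 1 then 1 else 0 := by
    rcases (x i).eq_zero_or_eq_one with h | h <;> simp [h]
  rw [monomial, prod_congr rfl fun i _ => hx i, prod_boole]
  simp [subset_iff]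

lemma monomial_mul_monomial (S T : Finset (Fin n)) (x : Fin n → ZMod 2) :
    monomial S x * monomial T x = monomial (S ∪ T) x := by
  simp only [monomial_eq_ite, union_subset_iff, ite_zero_mul_ite_zero, mul_one]

lemma anfCoeff_eq_sum_powerset (f : (Fin n → ZMod 2) → ZMod 2) (S : Finset (Fin n)) :
    anfCoeff f S = ∑ U ∈ S.powerset, f ((levelSetEquiv 1).symm U) := by
  refine sum_equiv (levelSetEquiv 1) (fun x => ?_) (fun x _ => by simp)
  simp [levelSetEquiv, subset_iff]

lemma anfCoeff_monomial (T S : Finset (Fin n)) :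
    anfCoeff (monomial T) S = if T = S then 1 else 0 := by
  rw [anfCoeff_eq_sum_powerset, ← natCast_card_Icc_zmod_two]
  simp only [monomial_eq_ite, levelSet_levelSetEquiv_symm]
  rw [← sum_filter, sum_const, nsmul_one]
  congr 2
  ext U
  simp [and_comm]

lemma sum_anfCoeff_mul_monomial (f : (Fin n → ZMod 2) → ZMod 2) (x : Fin n → ZMod 2) :
    ∑ S, anfCoeff f S * monomial S x = f x := by
  set e := levelSetEquiv (α := Fin n) 1
  have hx : e x = levelSet 1 x := rfl
  calc ∑ S, anfCoeff f S * monomial S x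
      = ∑ S ∈ (e x).powerset, ∑ U ∈ S.powerset, f (e.symm U) := by
        simp only [monomial_eq_ite, mul_ite, mul_one, mul_zero, ← sum_filter,
          anfCoeff_eq_sum_powerset]
        congr 1
        ext S
        simp [hx]
    _ = ∑ U ∈ (e x).powerset, ∑ S ∈ Icc U (e x), f (e.symm U) := by
        refine sum_comm' fun S U => ?_
        simp only [mem_powerset, mem_Icc]
        exact ⟨fun h => ⟨⟨h.2, h.1⟩, h.2.trans h.1⟩, fun h => ⟨h.1.2, h.1.1⟩⟩
    _ = f x := by
        simp only [sum_const, nsmul_eq_mul, natCast_card_Icc_zmod_two, ite_mul, one_mul,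
          zero_mul]
        rw [sum_ite_eq' _ _ (fun U => f (e.symm U)), if_pos (mem_powerset_self _),
          e.symm_apply_apply]

lemma sum_monomial_eq_zero {S : Finset (Fin n)} (hS : #S < n) : ∑ x, monomial S x = 0 := by
  have h := anfCoeff_monomial S univ
  rw [if_neg fun h => by simp [h] at hS] at h
  simpa [anfCoeff] using h

lemma degB_le_iff (g : (Fin n → ZMod 2) → ZMod 2) (D : ℕ) :
    degB g ≤ D ↔ ∀ S : Finset (Fin n), D < #S → anfCoeff g S = 0 := by
  simp only [degB, Finset.sup_le_iff, mem_filter, mem_univ, true_and]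
  exact forall_congr' fun S => by rw [← not_imp_not, not_le, not_not]

abbrev Monomials (n D : ℕ) := {S : Finset (Fin n) // #S ≤ D}

def lowDegEval (D : ℕ) : (Monomials n D → ZMod 2) →ₗ[ZMod 2] ((Fin n → ZMod 2) → ZMod 2) :=
  Fintype.linearCombination (ZMod 2) fun S => monomial S.1

lemma lowDegEval_apply {D : ℕ} (c : Monomials n D → ZMod 2) (x : Fin n → ZMod 2) :
    lowDegEval D c x = ∑ S, c S * monomial S.1 x := by
  simp [lowDegEval, Fintype.linearCombination_apply, Finset.sum_apply]

lemma anfCoeff_lowDegEval {D : ℕ} (c : Monomials n D → ZMod 2) (S : Finset (Fin n)) :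
    anfCoeff (lowDegEval D c) S = if h : #S ≤ D then c ⟨S, h⟩ else 0 := by
  have hmono (T : Monomials n D) :
      ∑ x ∈ univ.filter (fun x : Fin n → ZMod 2 => ∀ i, x i = 1 → i ∈ S), monomial T.1 x =
        if T.1 = S then 1 else 0 :=
    anfCoeff_monomial T.1 S
  simp only [anfCoeff, lowDegEval_apply]
  rw [sum_comm]
  simp only [← mul_sum, hmono, mul_ite, mul_one, mul_zero]
  split_ifs with h
  · rw [Fintype.sum_eq_single ⟨S, h⟩ fun T hT => if_neg fun h' => hT (Subtype.ext h'),
      if_pos rfl]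
  · exact sum_eq_zero fun T _ => if_neg fun (h' : T.1 = S) => h (h' ▸ T.2)

lemma degB_lowDegEval_le {D : ℕ} (c : Monomials n D → ZMod 2) : degB (lowDegEval D c) ≤ D :=
  (degB_le_iff _ D).2 fun S hS => by rw [anfCoeff_lowDegEval, dif_neg hS.not_ge]

lemma lowDegEval_injective (D : ℕ) : Function.Injective (lowDegEval (n := n) D) := by
  refine (injective_iff_map_eq_zero _).2 fun c hc => funext fun S => ?_
  have h := congrArg (anfCoeff · S.1) hc
  simp only [anfCoeff_lowDegEval, dif_pos S.2] at h
  simpa [anfCoeff] using h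

lemma degB_le_iff_mem_range (g : (Fin n → ZMod 2) → ZMod 2) (D : ℕ) :
    degB g ≤ D ↔ g ∈ LinearMap.range (lowDegEval D) := by
  constructor
  · intro hg
    refine ⟨fun S => anfCoeff g S.1, funext fun x => ?_⟩
    rw [lowDegEval_apply, ← sum_anfCoeff_mul_monomial g x]
    refine Fintype.sum_of_injective Subtype.val Subtype.val_injective _ _ (fun S hS => ?_)
      fun _ => rfl
    rw [(degB_le_iff g D).1 hg S (not_le.1 fun h => hS ⟨⟨S, h⟩, rfl⟩), zero_mul]
  · rintro ⟨c, rfl⟩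
    exact degB_lowDegEval_le c

lemma eq_zero_of_lowDegEval_eq_zero_on_wtB_le {D : ℕ} {c : Monomials n D → ZMod 2}
    (hc : ∀ x, wtB x ≤ D → lowDegEval D c x = 0) : c = 0 := by
  funext S
  have h := anfCoeff_lowDegEval c S.1
  rw [dif_pos S.2] at h
  rw [← h, Pi.zero_apply, anfCoeff]
  exact sum_eq_zero fun x hx =>
    hc x ((card_le_card fun i hi => (mem_filter.1 hx).2 i (mem_filter.1 hi).2).trans S.2)

lemma sum_lowDegEval_mul_lowDegEval {D D' : ℕ} (h : D + D' < n) (c : Monomials n D → ZMod 2)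
    (d : Monomials n D' → ZMod 2) : ∑ x, lowDegEval D c x * lowDegEval D' d x = 0 := by
  simp only [lowDegEval_apply, sum_mul_sum]
  rw [sum_comm]
  refine sum_eq_zero fun S _ => ?_
  rw [sum_comm]
  refine sum_eq_zero fun T _ => ?_
  simp only [mul_mul_mul_comm, monomial_mul_monomial, ← mul_sum]
  rw [sum_monomial_eq_zero ((card_union_le _ _).trans_lt (by have := S.2; have := T.2; omega)),
    mul_zero]

lemma card_monomials {t : ℕ} (hn : n = 2 * t + 1) :
    Fintype.card (Monomials n t) = 2 ^ (n - 1) := by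
  subst hn
  rw [Fintype.card_subtype, card_filter, ← powerset_univ,
    sum_powerset_apply_card fun m => if m ≤ t then 1 else 0, card_univ, Fintype.card_fin,
    show 2 * t + 1 + 1 = (t + 1) + (t + 1) by omega, sum_range_add,
    show 2 * t + 1 - 1 = 2 * t by omega, pow_mul, show 2 ^ 2 = 4 by rfl,
    ← Nat.sum_range_choose_halfway t]
  simp only [smul_eq_mul, mul_ite, mul_one, mul_zero]
  rw [sum_eq_zero (s := range (t + 1)) (f := fun x => if t + 1 + x ≤ t then _ else 0)
    fun x _ => if_neg (by omega), add_zero]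
  exact sum_congr rfl fun x hx => if_pos (Nat.lt_succ_iff.1 (mem_range.1 hx))

lemma card_monomials_lt_succ {t : ℕ} (ht : t < n) :
    Fintype.card (Monomials n t) < Fintype.card (Monomials n (t + 1)) := by
  refine Fintype.card_lt_of_injective_not_surjective (fun S => ⟨S.1, S.2.trans t.le_succ⟩)
    (fun S T h => by simpa [Subtype.ext_iff] using h) fun h => ?_
  obtain ⟨S, -, hS⟩ := exists_subset_card_eq (s := (univ : Finset (Fin n))) (n := t + 1)
    (by simpa using ht)
  obtain ⟨T, hT⟩ := h ⟨S, hS.le⟩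
  have hT' : #T.1 = t + 1 := hS ▸ congrArg (fun S : Monomials n (t + 1) => #S.1) hT
  exact absurd T.2 (by omega)

def LowDegInjOn (D : ℕ) (s : Finset (Fin n → ZMod 2)) : Prop :=
  Function.Injective
    (LinearMap.funLeft (ZMod 2) (ZMod 2) ((↑) : s → Fin n → ZMod 2) ∘ₗ lowDegEval D)

lemma lowDegInjOn_iff {D : ℕ} {s : Finset (Fin n → ZMod 2)} :
    LowDegInjOn D s ↔ ∀ c, (∀ x ∈ s, lowDegEval D c x = 0) → c = 0 := by
  rw [LowDegInjOn, injective_iff_map_eq_zero]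
  simp [funext_iff, LinearMap.funLeft_apply]

lemma LowDegInjOn.card_le {D : ℕ} {s : Finset (Fin n → ZMod 2)} (h : LowDegInjOn D s) :
    Fintype.card (Monomials n D) ≤ #s := by
  simpa [Module.finrank_fintype_fun_eq_card] using LinearMap.finrank_le_finrank_of_injective h

lemma LowDegInjOn.compl {t : ℕ} {s : Finset (Fin n → ZMod 2)} (ht : 2 * t < n)
    (hs : #s = Fintype.card (Monomials n t)) (h : LowDegInjOn t s) : LowDegInjOn t sᶜ := by
  have hsurj := (LinearMap.injective_iff_surjective_of_finrank_eq_finrank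
    (by simp [Module.finrank_fintype_fun_eq_card, hs])).1 h
  rw [lowDegInjOn_iff] at h ⊢
  refine fun c hc => h c fun x hx => ?_
  -- pair `c` with the codeword that restricts to the indicator of `x` on `s`
  obtain ⟨d, hd⟩ := hsurj (Pi.single ⟨x, hx⟩ 1)
  have hd' (y : s) : lowDegEval t d y = Pi.single (M := fun _ => ZMod 2) ⟨x, hx⟩ 1 y :=
    congrFun hd y
  calc lowDegEval t c x
      = ∑ y : s, Pi.single (M := fun _ => ZMod 2) ⟨x, hx⟩ 1 y * lowDegEval t c y := by
        simp [Pi.single_apply]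
    _ = ∑ y ∈ s, lowDegEval t d y * lowDegEval t c y := by
        rw [← sum_coe_sort s]
        simp only [hd']
    _ = ∑ y, lowDegEval t d y * lowDegEval t c y :=
        sum_subset (subset_univ s) fun y _ hy => by rw [hc y (mem_compl.2 hy), mul_zero]
    _ = 0 := sum_lowDegEval_mul_lowDegEval (by omega) d c

lemma exists_isAnnihilator_degB_le_iff (f : (Fin n → ZMod 2) → ZMod 2) (D : ℕ) :
    (∃ g, IsAnnihilator f g ∧ degB g ≤ D) ↔ ¬ LowDegInjOn D (levelSet 1 f) := by
  simp only [lowDegInjOn_iff, mem_levelSet, not_forall, exists_prop]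
  constructor
  · rintro ⟨g, ⟨hg, hfg⟩, hdeg⟩
    obtain ⟨c, rfl⟩ := (degB_le_iff_mem_range g D).1 hdeg
    exact ⟨c, fun x hx => by simpa [hx] using hfg x, fun hc => hg (by simp [hc])⟩
  · rintro ⟨c, hvan, hc⟩
    refine ⟨lowDegEval D c, ⟨(map_ne_zero_iff _ (lowDegEval_injective D)).2 hc, fun x => ?_⟩,
      degB_lowDegEval_le c⟩
    rcases (f x).eq_zero_or_eq_one with h | h
    · rw [h, zero_mul]
    · rw [h, hvan x h, mul_zero]

lemma levelSet_one_add_one (f : (Fin n → ZMod 2) → ZMod 2) :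
    levelSet 1 (fun x => f x + 1) = levelSet 0 f := by
  ext x
  simp

lemma AI_eq_succ_iff {f : (Fin n → ZMod 2) → ZMod 2} {t : ℕ}
    (h : ∃ g, (IsAnnihilator f g ∨ IsAnnihilator (fun x => f x + 1) g) ∧ degB g ≤ t + 1) :
    AI f = t + 1 ↔
      ∀ g, IsAnnihilator f g ∨ IsAnnihilator (fun x => f x + 1) g → t < degB g := by
  obtain ⟨g₀, hg₀, hdeg₀⟩ := h
  have hg₀ : degB g₀ ∈ {d | ∃ g, (IsAnnihilator f g ∨ IsAnnihilator (fun x => f x + 1) g) ∧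
      degB g = d} := ⟨g₀, hg₀, rfl⟩
  have hle : AI f ≤ t + 1 := (Nat.sInf_le hg₀).trans hdeg₀
  rw [← hle.ge_iff_eq, AI, le_csInf_iff' ⟨_, hg₀⟩]
  simp only [lowerBounds, Set.mem_ofPred_eq, forall_exists_index, and_imp]
  exact ⟨fun h g hg => h g hg rfl, fun h _ g hg hd => hd ▸ h g hg⟩

lemma exists_isAnnihilator_degB_le_succ {t : ℕ} (hn : n = 2 * t + 1)
    (f : (Fin n → ZMod 2) → ZMod 2) :
    ∃ g, (IsAnnihilator f g ∨ IsAnnihilator (fun x => f x + 1) g) ∧ degB g ≤ t + 1 := by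
  have hsmall {s : Finset (Fin n → ZMod 2)} (hs : #s ≤ 2 ^ (n - 1)) :
      ¬ LowDegInjOn (t + 1) s := fun h => by
    have hlt := card_monomials_lt_succ (n := n) (t := t) (by omega)
    rw [card_monomials hn] at hlt
    exact absurd h.card_le (by omega)
  have htot := card_levelSet_one_add_card_levelSet_zero f
  rw [Fintype.card_fun, ZMod.card, Fintype.card_fin] at htot
  have h2n : 2 ^ n = 2 * 2 ^ (n - 1) := by rw [← pow_succ']; congr; omega
  by_cases h1 : #(levelSet 1 f) ≤ 2 ^ (n - 1)
  · obtain ⟨g, hg, hdeg⟩ := (exists_isAnnihilator_degB_le_iff f _).2 (hsmall h1)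
    exact ⟨g, .inl hg, hdeg⟩
  · obtain ⟨g, hg, hdeg⟩ := (exists_isAnnihilator_degB_le_iff _ _).2
      (hsmall (s := levelSet 1 (fun x => f x + 1)) (by rw [levelSet_one_add_one]; omega))
    exact ⟨g, .inr hg, hdeg⟩

lemma AI_eq_succ_iff_lowDegInjOn {t : ℕ} (hn : n = 2 * t + 1) (f : (Fin n → ZMod 2) → ZMod 2) :
    AI f = t + 1 ↔ LowDegInjOn t (levelSet 1 f) ∧ LowDegInjOn t (levelSet 0 f) := by
  have hinj (h : (Fin n → ZMod 2) → ZMod 2) :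
      LowDegInjOn t (levelSet 1 h) ↔ ∀ g, IsAnnihilator h g → t < degB g := by
    rw [← not_not (a := LowDegInjOn _ _), ← exists_isAnnihilator_degB_le_iff]
    simp only [not_exists, not_and, not_le]
  rw [AI_eq_succ_iff (exists_isAnnihilator_degB_le_succ hn f), ← levelSet_one_add_one, hinj,
    hinj, ← forall_and]
  exact forall_congr' fun g => or_imp

lemma AI_eq_succ_iff_balanced {t : ℕ} (hn : n = 2 * t + 1) (f : (Fin n → ZMod 2) → ZMod 2) :
    AI f = t + 1 ↔ #(levelSet 1 f) = 2 ^ (n - 1) ∧ LowDegInjOn t (levelSet 1 f) := by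
  have htot := card_levelSet_one_add_card_levelSet_zero f
  rw [Fintype.card_fun, ZMod.card, Fintype.card_fin] at htot
  have h2n : 2 ^ n = 2 * 2 ^ (n - 1) := by rw [← pow_succ']; congr; omega
  rw [AI_eq_succ_iff_lowDegInjOn hn, ← card_monomials hn]
  refine ⟨fun ⟨h₁, h₀⟩ => ⟨?_, h₁⟩, fun ⟨hcard, h₁⟩ => ⟨h₁, ?_⟩⟩
  · have := h₁.card_le
    have := h₀.card_le
    rw [card_monomials hn] at *
    omega
  · rw [levelSet_zero]
    exact h₁.compl (by omega) hcard

variable {t N : ℕ} {Y Z : Fin N → Fin n → ZMod 2}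

lemma VEnum_mulVec (D : ℕ) (Y : Fin N → Fin n → ZMod 2) (c : Monomials n D → ZMod 2) :
    VEnum D Y *ᵥ c = fun r => lowDegEval D c (Y r) := by
  funext r
  simp [Matrix.mulVec, dotProduct, VEnum, lowDegEval_apply, monomial, mul_comm]

lemma card_monomials_eq_of_range (hYinj : Function.Injective Y)
    (hY : Set.range Y = {x | wtB x ≤ t}) : Fintype.card (Monomials n t) = N := by
  calc Fintype.card (Monomials n t) = Nat.card (Monomials n t) := Nat.card_eq_fintype_card.symm
    _ = Nat.card {x : Fin n → ZMod 2 | wtB x ≤ t} :=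
        Nat.card_congr ((levelSetEquiv 1).subtypeEquiv fun _ => Iff.rfl).symm
    _ = N := by
        rw [← hY, Nat.card_range_of_injective hYinj, Nat.card_eq_fintype_card, Fintype.card_fin]

lemma VEnum_mulVecLin_bijective (hYinj : Function.Injective Y)
    (hY : Set.range Y = {x | wtB x ≤ t}) : Function.Bijective (VEnum t Y).mulVecLin := by
  have hinj : Function.Injective (VEnum t Y).mulVecLin := by
    refine (injective_iff_map_eq_zero _).2 fun c hc =>
      eq_zero_of_lowDegEval_eq_zero_on_wtB_le fun x hx => ?_
    obtain ⟨r, rfl⟩ : x ∈ Set.range Y := hY ▸ hx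
    simpa [VEnum_mulVec] using congrFun hc r
  refine ⟨hinj, (LinearMap.injective_iff_surjective_of_finrank_eq_finrank ?_).1 hinj⟩
  simp [Module.finrank_fintype_fun_eq_card, card_monomials_eq_of_range hYinj hY]

lemma lowDegInjOn_levelSet_one_iff {W : Matrix (Fin N) (Fin N) (ZMod 2)}
    (hYinj : Function.Injective Y) (hY : Set.range Y = {x | wtB x ≤ t})
    (hZ : Set.range Z = {x | wtB x ≤ t}ᶜ) (hW : W * VEnum t Y = VEnum t Z)
    (f : (Fin n → ZMod 2) → ZMod 2) :
    LowDegInjOn t (levelSet 1 f) ↔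
      W.IsInjectiveMinor (levelSet 1 (f ∘ Z)) (levelSet 0 (f ∘ Y)) := by
  obtain ⟨hinj, hsurj⟩ := VEnum_mulVecLin_bijective hYinj hY
  have hZW (c : Monomials n t → ZMod 2) :
      W *ᵥ (VEnum t Y *ᵥ c) = fun s => lowDegEval t c (Z s) := by
    rw [mulVec_mulVec, hW, VEnum_mulVec]
  have hcover (x : Fin n → ZMod 2) : (∃ r, Y r = x) ∨ ∃ s, Z s = x := by
    by_cases hx : wtB x ≤ t
    · exact .inl (hY ▸ hx : x ∈ Set.range Y)
    · exact .inr (hZ ▸ hx : x ∈ Set.range Z)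
  rw [lowDegInjOn_iff]
  constructor
  · intro h u hu hWu
    obtain ⟨c, rfl⟩ := hsurj u
    rw [h c fun x hx => ?_, map_zero]
    rw [mem_levelSet] at hx
    rcases hcover x with ⟨r, rfl⟩ | ⟨s, rfl⟩
    · simpa [VEnum_mulVec] using hu r (by simp [hx])
    · simpa [hZW] using hWu s (by simpa using hx)
  · intro h c hc
    refine hinj ((h _ (fun r hr => ?_) fun s hs => ?_).trans (map_zero _).symm)
    · rw [mulVecLin_apply, VEnum_mulVec]
      exact hc _ (by simpa using ((f (Y r)).eq_zero_or_eq_one.resolve_left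
        (by simpa using hr)))
    · rw [mulVecLin_apply, hZW]
      exact hc _ (by simpa using hs)

theorem AI_eq_succ_iff_isInjectiveMinor {W : Matrix (Fin N) (Fin N) (ZMod 2)}
    (hn : n = 2 * t + 1) (hYinj : Function.Injective Y) (hY : Set.range Y = {x | wtB x ≤ t})
    (hZ : Set.range Z = {x | wtB x ≤ t}ᶜ) (hYZ : Function.Bijective (Sum.elim Z Y))
    (hW : W * VEnum t Y = VEnum t Z) (f : (Fin n → ZMod 2) → ZMod 2) :
    AI f = t + 1 ↔ #(levelSet 1 (f ∘ Z)) = #(levelSet 0 (f ∘ Y)) ∧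
      W.IsInjectiveMinor (levelSet 1 (f ∘ Z)) (levelSet 0 (f ∘ Y)) := by
  have hsplit := card_levelSet_of_bijective_sumElim hYZ 1 f
  have hYf := card_levelSet_one_add_card_levelSet_zero (f ∘ Y)
  have hN := (card_monomials_eq_of_range hYinj hY).symm.trans (card_monomials hn)
  rw [Fintype.card_fin] at hYf
  rw [AI_eq_succ_iff_balanced hn, lowDegInjOn_levelSet_one_iff hYinj hY hZ hW]
  exact and_congr_left' ⟨fun _ => by omega, fun _ => by omega⟩

end BooleanFunction

/-- with `G_n` the majority-type function (`1` on weight `≤ t`, `0` otherwise)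
and `W = V(0_{G_n}) · V(1_{G_n})⁻¹`, the number of `n`-variable Boolean functions with
maximum algebraic immunity `t+1` equals the number of tuples
`(k; i₁ < … < i_k; j₁ < … < j_k)` whose associated `k × k` submatrix of `W` is invertible. -/
theorem stmt_9 (n t : ℕ) (hn : n = 2 * t + 1)
    (Y Z : Fin (2 ^ (n - 1)) → (Fin n → ZMod 2))
    (hYinj : Function.Injective Y)
    (hYran : Set.range Y = {x | (if wtB x ≤ t then (1 : ZMod 2) else 0) = 1})
    (hZinj : Function.Injective Z)
    (hZran : Set.range Z = {x | (if wtB x ≤ t then (1 : ZMod 2) else 0) = 0})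
    (W : Matrix (Fin (2 ^ (n - 1))) (Fin (2 ^ (n - 1))) (ZMod 2))
    (hW : W * VEnum t Y = VEnum t Z) :
    Nat.card {f : (Fin n → ZMod 2) → ZMod 2 // AI f = t + 1} =
      Nat.card {q : (k : Fin (2 ^ (n - 1) + 1)) ×
          (Fin (k : ℕ) → Fin (2 ^ (n - 1))) × (Fin (k : ℕ) → Fin (2 ^ (n - 1))) //
        StrictMono q.2.1 ∧ StrictMono q.2.2 ∧ IsUnit (W.submatrix q.2.1 q.2.2).det} := by
  have hY : Set.range Y = {x | wtB x ≤ t} := by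
    rw [hYran]; ext x; by_cases h : wtB x ≤ t <;> simp [h]
  have hZ : Set.range Z = {x | wtB x ≤ t}ᶜ := by
    rw [hZran]; ext x; by_cases h : wtB x ≤ t <;> simp [h, not_le.1]
  have hYZ : Function.Bijective (Sum.elim Z Y) := hZinj.bijective_sumElim hYinj (by rw [hZ, hY])
  calc Nat.card {f : (Fin n → ZMod 2) → ZMod 2 // AI f = t + 1}
      = Nat.card {p : Finset (Fin (2 ^ (n - 1))) × Finset (Fin (2 ^ (n - 1))) //
          #p.1 = #p.2 ∧ W.IsInjectiveMinor p.1 p.2} :=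
        Nat.card_congr <| (levelSetsEquiv hYZ).subtypeEquiv
          (BooleanFunction.AI_eq_succ_iff_isInjectiveMinor hn hYinj hY hZ hYZ hW)
    _ = _ := (card_strictMono_pairs_eq _ _).symm
    _ = _ := Nat.card_congr <| Equiv.subtypeEquivRight fun q =>
          and_congr_right fun _ => and_congr_right fun hb =>
            (W.isUnit_det_submatrix_iff q.2.1 hb.injective).symm
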